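/- arXiv:2601.14206 — 3 statements merged into one kernel-verified Lean document; each statement's English description precedes it below -/
import Mathlib

section
/- Let k, R, N be positive integers with N > 4kR, and let H be a k-local Hamiltonian of range R on the open chain of N qubit sites. Suppose that for every 0 ≤ p ≤ N there is E_p ∈ ℂ with H |W^p⟩ = E_p |W^p⟩. Then there exist Ω, ω ∈ ℂ such that E_p = Ω + ω·p for all 0 ≤ p ≤ N. -/
open scoped BigOperators
set_option linter.unusedSectionVars false

noncomputable section

/-- The state space of a collection of qubits indexed by `V`: the complex vector space of
functions from configurations `V → Bool` to `ℂ`. -/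
abbrev QState (V : Type*) := (V → Bool) → ℂ

section Defs

variable {V : Type*} [Fintype V] [DecidableEq V]

/-- The standard basis vector associated to the configuration `f`. -/
def basisVec (f : V → Bool) : QState V := fun g => if g = f then 1 else 0

/-- The creation operator `s†_i` at site `i`. -/
def creOp (i : V) : Module.End ℂ (QState V) where
  toFun ψ := fun g => if g i = true then ψ (Function.update g i false) else 0
  map_add' ψ φ := by funext g; by_cases h : g i = true <;> simp [h]
  map_smul' a ψ := by funext g; by_cases h : g i = true <;> simp [h]

/-- The annihilation operator `s_i` at site `i`. -/
def annOp (i : V) : Module.End ℂ (QState V) where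
  toFun ψ := fun g => if g i = false then ψ (Function.update g i true) else 0
  map_add' ψ φ := by funext g; by_cases h : g i = false <;> simp [h]
  map_smul' a ψ := by funext g; by_cases h : g i = false <;> simp [h]

@[simp] lemma creOp_apply (i : V) (ψ : QState V) (g : V → Bool) :
    creOp i ψ g = if g i = true then ψ (Function.update g i false) else 0 := rfl

variable (V)

/-- The vacuum `|0̄⟩`: the basis vector of the all-false configuration. -/
def vac : QState V := basisVec (fun _ => false)

/-- The total raising operator `S† = ∑ i, s†_i`. -/
def Sdag : Module.End ℂ (QState V) := ∑ i : V, creOp i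

/-- The number operator `N̂ = ∑ i, s†_i s_i`. -/
def numOp : Module.End ℂ (QState V) := ∑ i : V, creOp i * annOp i

/-- The unnormalized Dicke state `|W^p⟩ = (S†)^p |0̄⟩`. -/
def WState (p : ℕ) : QState V := ((Sdag V) ^ p) (vac V)

variable {V}

/-- Creation operators at different sites commute. -/
lemma creOp_commute (i j : V) : Commute (creOp (V := V) i) (creOp j) := by
  rcases eq_or_ne i j with rfl | hij
  · exact Commute.refl _
  · show creOp i * creOp j = creOp j * creOp i
    refine LinearMap.ext fun ψ => funext fun g => ?_
    simp only [Module.End.mul_apply, creOp_apply]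
    by_cases hi : g i = true <;> by_cases hj : g j = true <;>
      simp [hi, hj, Function.update_of_ne hij, Function.update_of_ne hij.symm,
        Function.update_comm hij]

/-- The product `∏_{j ∈ Y} s†_j` of creation operators over a finite set `Y` of sites
(the operators commute, so the product is well defined; the empty product is the identity). -/
def creProd (Y : Finset V) : Module.End ℂ (QState V) :=
  Y.noncommProd creOp fun a _ b _ _ => creOp_commute a b

/-- The operator `O` is supported on the set of sites `X`. -/
def SupportedOn (O : Module.End ℂ (QState V)) (X : Set V) : Prop :=
  (∀ f g : V → Bool, (∃ i ∉ X, f i ≠ g i) → O (basisVec f) g = 0) ∧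
  (∀ f f' g g' : V → Bool,
    (∀ i ∈ X, f i = f' i) → (∀ i ∈ X, g i = g' i) →
    (∀ i ∉ X, f i = g i) → (∀ i ∉ X, f' i = g' i) →
    O (basisVec f) g = O (basisVec f') g')

/-- An operator is `k`-local if it is a finite sum of operators each supported
on a subset of at most `k` sites. -/
def IsKLocal (k : ℕ) (O : Module.End ℂ (QState V)) : Prop :=
  ∃ (n : ℕ) (h : Fin n → Module.End ℂ (QState V)) (X : Fin n → Finset V),
    (∀ t, SupportedOn (h t) ↑(X t)) ∧ (∀ t, (X t).card ≤ k) ∧ O = ∑ t, h t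

/-- Vertices `i` and `j` are within distance `r` in the graph `G`:
they are joined by a walk of length at most `r`. -/
def WithinDist (G : SimpleGraph V) (r : ℕ) (i j : V) : Prop :=
  ∃ w : G.Walk i j, w.length ≤ r

/-- The ball of radius `r` around vertex `i` in the graph `G`. -/
def gball (G : SimpleGraph V) (i : V) (r : ℕ) : Set V := {j | WithinDist G r i j}

/-- `diam(X) ≤ R` with respect to `G`: every two vertices of `X` are within distance `R - 1`. -/
def GDiamLE (G : SimpleGraph V) (X : Finset V) (R : ℕ) : Prop :=
  ∀ i ∈ X, ∀ j ∈ X, WithinDist G (R - 1) i j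

/-- `H` is a Hamiltonian of range `R` with respect to the graph `G`: a finite sum over
nonempty subsets `X` with `diam(X) ≤ R` of operators supported on `X`. -/
def IsRangeHam (G : SimpleGraph V) (R : ℕ) (H : Module.End ℂ (QState V)) : Prop :=
  ∃ h : Finset V → Module.End ℂ (QState V),
    (∀ X, SupportedOn (h X) ↑X) ∧
    (∀ X, h X ≠ 0 → X.Nonempty ∧ GDiamLE G X R) ∧
    H = ∑ X : Finset V, h X

/-- `H` is a `k`-local Hamiltonian of range `R` with respect to the graph `G`. -/
def IsKLocalRangeHam (G : SimpleGraph V) (k R : ℕ) (H : Module.End ℂ (QState V)) : Prop :=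
  ∃ h : Finset V → Module.End ℂ (QState V),
    (∀ X, SupportedOn (h X) ↑X) ∧
    (∀ X, h X ≠ 0 → X.Nonempty ∧ GDiamLE G X R ∧ X.card ≤ k) ∧
    H = ∑ X : Finset V, h X

/-- An invertible linear operator `M` is `δ`-locality-preserving with respect to `G` if
conjugation by `M` or `M⁻¹` increases the range of any operator by at most `δ`. -/
def LocalityPreserving (G : SimpleGraph V) (δ : ℕ) (M : QState V ≃ₗ[ℂ] QState V) : Prop :=
  ∀ R : ℕ, 0 < R → ∀ O : Module.End ℂ (QState V), IsRangeHam G R O →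
    IsRangeHam G (R + δ) (M.toLinearMap ∘ₗ O ∘ₗ M.symm.toLinearMap) ∧
    IsRangeHam G (R + δ) (M.symm.toLinearMap ∘ₗ O ∘ₗ M.toLinearMap)

end Defs

section Chain

/-- Distance between two sites of the open chain `{0, …, N-1}`. -/
def chainDist {N : ℕ} (i j : Fin N) : ℕ := ((i : ℤ) - (j : ℤ)).natAbs

/-- `diam(X) ≤ R` on the open chain: `diam(X) = 1 + max |i - j|`. -/
def ChainDiamLE {N : ℕ} (X : Finset (Fin N)) (R : ℕ) : Prop :=
  ∀ i ∈ X, ∀ j ∈ X, chainDist i j + 1 ≤ R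

/-- `H` is a Hamiltonian of range `R` on the open chain of `N` sites. -/
def IsChainRangeHam {N : ℕ} (R : ℕ) (H : Module.End ℂ (QState (Fin N))) : Prop :=
  ∃ h : Finset (Fin N) → Module.End ℂ (QState (Fin N)),
    (∀ X, SupportedOn (h X) ↑X) ∧
    (∀ X, h X ≠ 0 → X.Nonempty ∧ ChainDiamLE X R) ∧
    H = ∑ X : Finset (Fin N), h X

/-- `H` is a `k`-local Hamiltonian of range `R` on the open chain of `N` sites. -/
def IsChainKLocalRangeHam {N : ℕ} (k R : ℕ) (H : Module.End ℂ (QState (Fin N))) : Prop :=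
  ∃ h : Finset (Fin N) → Module.End ℂ (QState (Fin N)),
    (∀ X, SupportedOn (h X) ↑X) ∧
    (∀ X, h X ≠ 0 → X.Nonempty ∧ ChainDiamLE X R ∧ X.card ≤ k) ∧
    H = ∑ X : Finset (Fin N), h X

end Chain

end

/-!
The amplitude of `O |W^p⟩` at a configuration `g` with `p` excitations is `p!` times the row sum
`∑_{|f| = p} ⟨g| O |f⟩`, so the eigenvalue equations say that all these row sums of `H` equal `E_p`.
For an operator supported away from a site `j`, adding an excitation at `j` to `g` only shifts the
row sum from `p` to `p + 1`. Every local term of `H` misses one of the two end sites `a`, `b` of the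
chain, since `N > R`; comparing `g`, `g + a`, `g + b` and `g + a + b` therefore gives
`E_{p+2} + E_p = 2 E_{p+1}`, so `p ↦ E_p` is affine.
-/

open Finset Function

theorem exists_affine_of_second_diff_eq {A : Type*} [CommRing A] {n : ℕ} {E : ℕ → A}
    (h : ∀ p, p + 2 ≤ n → E (p + 2) + E p = 2 * E (p + 1)) :
    ∃ Ω ω : A, ∀ p ≤ n, E p = Ω + ω * p := by
  refine ⟨E 0, E 1 - E 0, fun p => ?_⟩
  induction p using Nat.twoStepInduction with
  | zero => intro; simp
  | one => intro; simp
  | more p ih₀ ih₁ =>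
    intro hp
    have h₁ := ih₁ (by omega)
    push_cast at h₁ ⊢
    linear_combination h p hp + 2 * h₁ - ih₀ (by omega)

noncomputable section

variable {V : Type*} [Fintype V] [DecidableEq V]

def numExcited (f : V → Bool) : ℕ := (univ.filter fun i => f i = true).card

lemma numExcited_update_true {f : V → Bool} {j : V} (hf : f j = false) :
    numExcited (update f j true) = numExcited f + 1 := by
  have : (univ.filter fun i => update f j true i = true) =
      insert j (univ.filter fun i => f i = true) := by
    ext i
    rcases eq_or_ne i j with rfl | hij <;> simp [*]
  rw [numExcited, this, card_insert_of_notMem (by simp [hf]), numExcited]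

lemma numExcited_update_false {f : V → Bool} {j : V} (hf : f j = true) :
    numExcited (update f j false) + 1 = numExcited f := by
  have := numExcited_update_true (f := update f j false) (j := j) (by simp)
  rw [update_idem, update_eq_self_iff.2 hf.symm] at this
  exact this.symm

lemma numExcited_eq_zero_iff {f : V → Bool} : numExcited f = 0 ↔ f = fun _ => false := by
  simp [numExcited, filter_eq_empty_iff, funext_iff]

lemma numExcited_decide_mem (t : Finset V) : numExcited (fun i => decide (i ∈ t)) = t.card := by
  simp [numExcited]

lemma WState_apply (p : ℕ) (g : V → Bool) :
    WState V p g = if numExcited g = p then (p.factorial : ℂ) else 0 := by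
  induction p generalizing g with
  | zero =>
    simp [WState, vac, basisVec, numExcited_eq_zero_iff]
  | succ p ih =>
    have hterm : ∀ i, (if g i = true then WState V p (update g i false) else 0) =
        if g i = true then (if numExcited g = p + 1 then (p.factorial : ℂ) else 0) else 0 := by
      intro i
      by_cases hi : g i = true
      · simp only [hi, if_true, ih, ← numExcited_update_false hi, Nat.add_right_cancel_iff]
      · rw [if_neg hi, if_neg hi]
    rw [WState, pow_succ', Module.End.mul_apply, ← WState, Sdag, LinearMap.sum_apply,
      Finset.sum_apply]
    simp only [creOp_apply, hterm]
    rw [← sum_filter, sum_const]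
    change numExcited g • _ = _
    split_ifs with hg
    · rw [hg, nsmul_eq_mul, Nat.factorial_succ]
      push_cast
      ring
    · simp

lemma apply_eq_sum_basisVec (T : Module.End ℂ (QState V)) (ψ : QState V) (g : V → Bool) :
    T ψ g = ∑ f, ψ f * T (basisVec f) g := by
  rw [LinearMap.pi_apply_eq_sum_univ T ψ, Finset.sum_apply]
  refine sum_congr rfl fun f _ => ?_
  have : basisVec f = fun g => if f = g then 1 else 0 := by ext; simp only [basisVec, eq_comm]
  rw [this, Pi.smul_apply, smul_eq_mul]

def dickeRowSum (O : Module.End ℂ (QState V)) (p : ℕ) (g : V → Bool) : ℂ :=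
  ∑ f ∈ univ.filter fun f => numExcited f = p, O (basisVec f) g

lemma apply_WState (O : Module.End ℂ (QState V)) (p : ℕ) (g : V → Bool) :
    O (WState V p) g = p.factorial * dickeRowSum O p g := by
  rw [apply_eq_sum_basisVec, dickeRowSum, mul_sum, sum_filter]
  refine sum_congr rfl fun f _ => ?_
  rw [WState_apply]
  split_ifs <;> simp

lemma dickeRowSum_eq_of_apply_WState_eq_smul {O : Module.End ℂ (QState V)} {p : ℕ} {e : ℂ}
    (hO : O (WState V p) = e • WState V p) {g : V → Bool} (hg : numExcited g = p) :
    dickeRowSum O p g = e := by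
  have := congrFun hO g
  rw [apply_WState, Pi.smul_apply, WState_apply, if_pos hg, smul_eq_mul, mul_comm e] at this
  exact mul_left_cancel₀ (Nat.cast_ne_zero.2 p.factorial_ne_zero) this

lemma dickeRowSum_sum {ι : Type*} (s : Finset ι) (h : ι → Module.End ℂ (QState V)) (p : ℕ)
    (g : V → Bool) : dickeRowSum (∑ X ∈ s, h X) p g = ∑ X ∈ s, dickeRowSum (h X) p g := by
  simp only [dickeRowSum, LinearMap.sum_apply, Finset.sum_apply]
  exact sum_comm

namespace SupportedOn

variable {O : Module.End ℂ (QState V)} {X : Set V}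

lemma apply_eq_zero (hO : SupportedOn O X) {i : V} (hi : i ∉ X) {f g : V → Bool}
    (hfg : f i ≠ g i) : O (basisVec f) g = 0 :=
  hO.1 f g ⟨i, hi, hfg⟩

lemma apply_update_update (hO : SupportedOn O X) {j : V} (hj : j ∉ X) (f g : V → Bool)
    (b c : Bool) :
    O (basisVec (update f j b)) (update g j b) = O (basisVec (update f j c)) (update g j c) := by
  by_cases hfg : ∀ i ∉ X, i ≠ j → f i = g i
  · have hX : ∀ i ∈ X, i ≠ j := fun i hi hij => hj (hij ▸ hi)
    apply hO.2 <;> intro i hi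
    · simp [update_of_ne (hX i hi)]
    · simp [update_of_ne (hX i hi)]
    · rcases eq_or_ne i j with rfl | hij
      · simp
      · simp [update_of_ne hij, hfg i hi hij]
    · rcases eq_or_ne i j with rfl | hij
      · simp
      · simp [update_of_ne hij, hfg i hi hij]
  · push Not at hfg
    obtain ⟨i, hi, hij, hne⟩ := hfg
    rw [hO.apply_eq_zero hi (by simpa [update_of_ne hij]),
      hO.apply_eq_zero hi (by simpa [update_of_ne hij])]

lemma dickeRowSum_update_true (hO : SupportedOn O X) {j : V} (hj : j ∉ X) {g : V → Bool}
    (hg : g j = false) (q : ℕ) :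
    dickeRowSum O (q + 1) (update g j true) = dickeRowSum O q g := by
  have excited : ∑ f ∈ (univ.filter fun f => numExcited f = q + 1).filter (fun f => f j = true),
      O (basisVec f) (update g j true) = dickeRowSum O (q + 1) (update g j true) :=
    sum_filter_of_ne fun f _ hne => by
      by_contra hfj
      exact hne (hO.apply_eq_zero hj (by simpa using hfj))
  have vacant : ∑ f ∈ (univ.filter fun f => numExcited f = q).filter (fun f => f j = false),
      O (basisVec f) g = dickeRowSum O q g :=
    sum_filter_of_ne fun f _ hne => by
      by_contra hfj
      exact hne (hO.apply_eq_zero hj (by simpa [hg] using hfj))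
  rw [← excited, ← vacant]
  refine sum_nbij' (fun f => update f j false) (fun f => update f j true) ?_ ?_ ?_ ?_ ?_ <;>
    intro f hf <;> simp only [mem_filter, mem_univ, true_and] at hf ⊢
  · have := numExcited_update_false hf.2
    exact ⟨by omega, by simp⟩
  · exact ⟨by rw [numExcited_update_true hf.2, hf.1], by simp⟩
  · simp [hf.2]
  · simp [hf.2]
  · have := hO.apply_update_update hj f g true false
    rwa [update_eq_self_iff.2 (Eq.symm hf.2), (update_eq_self_iff (f := g)).2 hg.symm] at this

lemma dickeRowSum_parallelogram (hO : SupportedOn O X) {a b : V} (hab : a ≠ b)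
    (hX : a ∉ X ∨ b ∉ X) {g : V → Bool} (ha : g a = false) (hb : g b = false) (p : ℕ) :
    dickeRowSum O (p + 2) (update (update g a true) b true) + dickeRowSum O p g =
      dickeRowSum O (p + 1) (update g a true) + dickeRowSum O (p + 1) (update g b true) := by
  rcases hX with haX | hbX
  · rw [update_comm hab, hO.dickeRowSum_update_true haX (by simpa [update_of_ne hab]),
      hO.dickeRowSum_update_true haX ha, add_comm]
  · rw [hO.dickeRowSum_update_true hbX (by simpa [update_of_ne hab.symm]),
      hO.dickeRowSum_update_true hbX hb]

end SupportedOn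

theorem dicke_eigenvalues_affine_of_separated_sites {a b : V} (hab : a ≠ b)
    (h : Finset V → Module.End ℂ (QState V)) (hsupp : ∀ X, SupportedOn (h X) ↑X)
    (hsep : ∀ X, h X ≠ 0 → a ∉ X ∨ b ∉ X) (E : ℕ → ℂ)
    (hE : ∀ p ≤ Fintype.card V, (∑ X, h X) (WState V p) = E p • WState V p) :
    ∃ Ω ω : ℂ, ∀ p ≤ Fintype.card V, E p = Ω + ω * p := by
  refine exists_affine_of_second_diff_eq fun p hp => ?_
  obtain ⟨t, ht, rfl⟩ := exists_subset_card_eq (s := univ \ {a, b}) (n := p)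
    (by rw [card_univ_sdiff, card_pair hab]; omega)
  set g : V → Bool := fun i => decide (i ∈ t)
  have ha : g a = false := by simpa [g] using fun h => (mem_sdiff.1 (ht h)).2 (by simp)
  have hb : g b = false := by simpa [g] using fun h => (mem_sdiff.1 (ht h)).2 (by simp)
  have hg := numExcited_decide_mem t
  have hrow : ∀ q ≤ Fintype.card V, ∀ g' : V → Bool, numExcited g' = q →
      dickeRowSum (∑ X, h X) q g' = E q := fun q hq _ =>
    dickeRowSum_eq_of_apply_WState_eq_smul (hE q hq)
  calc E (t.card + 2) + E t.card
      = dickeRowSum (∑ X, h X) (t.card + 2) (update (update g a true) b true)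
          + dickeRowSum (∑ X, h X) t.card g := by
        rw [hrow _ hp, hrow _ (by omega) _ hg]
        rw [numExcited_update_true (by simpa [update_of_ne hab.symm]),
          numExcited_update_true ha, hg]
    _ = dickeRowSum (∑ X, h X) (t.card + 1) (update g a true)
          + dickeRowSum (∑ X, h X) (t.card + 1) (update g b true) := by
        simp only [dickeRowSum_sum, ← sum_add_distrib]
        refine sum_congr rfl fun X _ => ?_
        by_cases hX : h X = 0
        · simp [dickeRowSum, hX]
        · exact (hsupp X).dickeRowSum_parallelogram hab (hsep X hX) ha hb _
    _ = 2 * E (t.card + 1) := by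
        rw [hrow _ (by omega) _ (by rw [numExcited_update_true ha, hg]),
          hrow _ (by omega) _ (by rw [numExcited_update_true hb, hg])]
        ring

end

theorem dicke_tower_equal_spacing_1D_general
    (k R N : ℕ) (hk : 0 < k) (hR : 0 < R) (hbig : 4 * k * R < N)
    (H : Module.End ℂ (QState (Fin N)))
    (hH : IsChainKLocalRangeHam k R H)
    (E : ℕ → ℂ)
    (hE : ∀ p ≤ N, H (WState (Fin N) p) = E p • WState (Fin N) p) :
    ∃ Ω ω : ℂ, ∀ p ≤ N, E p = Ω + ω * p := by
  obtain ⟨h, hsupp, hlocal, rfl⟩ := hH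
  have hRN : R < N := by nlinarith
  let a : Fin N := ⟨0, by omega⟩
  let b : Fin N := ⟨N - 1, by omega⟩
  have hsep : ∀ X, h X ≠ 0 → a ∉ X ∨ b ∉ X := by
    intro X hX
    by_contra! hab
    have := (hlocal X hX).2.1 a hab.1 b hab.2
    simp [chainDist, a, b] at this
    omega
  simpa using dicke_eigenvalues_affine_of_separated_sites (a := a) (b := b)
    (by simp [a, b, Fin.ext_iff]; omega) h hsupp hsep E (by simpa using hE)

/-- Equal spacing of the Dicke tower for k-local Hamiltonians of range R
on the open chain of N qubit sites, when N > 4kR. -/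
theorem dicke_tower_equal_spacing_1D
    (k R N : ℕ) (hk : 0 < k) (hR : 0 < R) (hN : 0 < N) (hbig : 4 * k * R < N)
    (H : Module.End ℂ (QState (Fin N)))
    (hH : IsChainKLocalRangeHam k R H)
    (E : ℕ → ℂ)
    (hE : ∀ p ≤ N, H (WState (Fin N) p) = E p • WState (Fin N) p) :
    ∃ Ω ω : ℂ, ∀ p ≤ N, E p = Ω + ω * p :=
  dicke_tower_equal_spacing_1D_general k R N hk hR hbig H hH E hE
end

section
/- Let R, N be positive integers with N > 4R, and let H be a Hamiltonian of range R on the open chain of N qubit sites such that H |W⟩ = λ |W⟩ for some λ ∈ ℂ. Then there exist Ω, ω ∈ ℂ and, for each nonempty subset X ⊆ V with diam(X) ≤ 2R, an operator h_X supported on X satisfying h_X |W⟩ = 0 and h_X |0̄⟩ = 0, such that H = Ω·I + ω·N̂ + ∑_X h_X. -/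
open scoped BigOperators
set_option linter.unusedSectionVars false

/-!
A range-`R` operator has vanishing matrix elements between configurations that differ at two
sites at distance `≥ R`, and its matrix elements do not change when a site far from all the
differences is flipped in both configurations. Feeding these two facts into the eigenvalue
equation for `|W⟩` at configurations with two excitations shows that `H|0̄⟩ = Ω|0̄⟩`; for
single excitations one uses that every site lies in a triple of mutually distant sites.
Hence `K = H - Ω - (λ - Ω) N̂` annihilates `|0̄⟩` and `|W⟩`.

Group `K` into terms `κ s` supported on the windows `[s, s + R)`. The action of a local `O`
on `|0̄⟩` and `|W⟩` is recorded by the pair `(O|0̄⟩, O|W⟩ - S† O|0̄⟩)`, both localized on the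
support of `O`, and any such pair is realized by an explicit operator `Γ_s` on a window.
With `D s` the sum of the pairs of the windows to the left of `s`, the terms
`κ s + Γ_s (D s) - Γ_{s+1} (D (s+1))` annihilate both states, live on two adjacent windows
and telescope back to `K`; `D s` is localized on window `s` because it is also minus the sum
of the pairs to its right.
-/

noncomputable section

open Finset

section Qubits

variable {V : Type*} [Fintype V] [DecidableEq V]

def excitedAt (i : V) : V → Bool := Function.update (fun _ => false) i true

lemma excitedAt_apply (i j : V) : excitedAt i j = decide (j = i) := by
  by_cases h : j = i <;> simp [excitedAt, h]

lemma eq_excitedAt_of_forall {g : V → Bool} {t : V} (ht : g t = true)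
    (h : ∀ i, g i = true → i = t) : g = excitedAt t := by
  funext i
  rw [excitedAt_apply]
  by_cases hi : i = t
  · simp [hi, ht]
  · simpa [hi] using mt (h i) hi

lemma basisVec_apply (f g : V → Bool) : basisVec f g = if g = f then 1 else 0 := rfl

lemma creOp_vac (i : V) : creOp i (vac V) = basisVec (excitedAt i) := by
  funext g
  have : g = excitedAt i ↔ g i = true ∧ Function.update g i false = fun _ => false := by
    constructor
    · rintro rfl
      simp [excitedAt]
    · rintro ⟨hi, hg⟩
      rw [excitedAt, ← hg, Function.update_idem, Function.update_eq_self_iff.2 hi.symm]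
  simp only [creOp_apply, vac, basisVec_apply, this]
  by_cases hi : g i = true <;> simp [hi]

lemma WState_one_eq_sum : WState V 1 = ∑ i, basisVec (excitedAt i) := by
  simp [WState, Sdag, LinearMap.sum_apply, creOp_vac]

lemma WState_one_apply_eq_zero {g : V → Bool} {u v : V} (hu : g u = true) (hv : g v = true)
    (huv : u ≠ v) : WState V 1 g = 0 := by
  rw [WState_one_eq_sum, Finset.sum_apply]
  refine Finset.sum_eq_zero fun i _ => if_neg ?_
  rintro rfl
  simp only [excitedAt_apply, decide_eq_true_eq] at hu hv
  exact huv (hu.trans hv.symm)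

lemma creOp_mul_annOp_apply (i : V) (ψ : QState V) (g : V → Bool) :
    (creOp i * annOp i) ψ g = if g i = true then ψ g else 0 := by
  by_cases h : g i = true
  · have hg : Function.update g i true = g := by rw [← h, Function.update_eq_self]
    simp [creOp_apply, annOp, h, hg]
  · simp [creOp_apply, h]

lemma numOp_basisVec (f : V → Bool) :
    numOp V (basisVec f) = ∑ i, if f i = true then basisVec f else 0 := by
  funext g
  simp only [numOp, LinearMap.sum_apply, Finset.sum_apply, creOp_mul_annOp_apply]
  refine Finset.sum_congr rfl fun i _ => ?_
  by_cases hg : g = f <;> simp [hg, basisVec_apply, ite_apply]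

lemma numOp_vac : numOp V (vac V) = 0 := by
  simp [vac, numOp_basisVec]

lemma numOp_WState_one : numOp V (WState V 1) = WState V 1 := by
  rw [WState_one_eq_sum, map_sum]
  refine Finset.sum_congr rfl fun j _ => ?_
  rw [numOp_basisVec, Fintype.sum_eq_single j fun i hi => by simp [excitedAt_apply, hi]]
  simp [excitedAt_apply]

lemma eq_iff_eq_of_agree {X : Set V} {f f' g g' : V → Bool}
    (hff' : ∀ i ∈ X, f i = f' i) (hgg' : ∀ i ∈ X, g i = g' i)
    (hfg : ∀ i ∉ X, f i = g i) (hf'g' : ∀ i ∉ X, f' i = g' i) : g = f ↔ g' = f' := by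
  constructor <;> intro h <;> funext i <;> by_cases hi : i ∈ X
  · rw [← hgg' i hi, ← hff' i hi, h]
  · exact (hf'g' i hi).symm
  · rw [hgg' i hi, hff' i hi, h]
  · exact (hfg i hi).symm

def supportedOps (X : Set V) : Submodule ℂ (Module.End ℂ (QState V)) where
  carrier := {O | SupportedOn O X}
  zero_mem' := ⟨fun _ _ _ => rfl, fun _ _ _ _ _ _ _ _ => rfl⟩
  add_mem' {O P} hO hP := by
    refine ⟨fun f g hfg => ?_, fun f f' g g' h₁ h₂ h₃ h₄ => ?_⟩
    · simp [hO.1 f g hfg, hP.1 f g hfg]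
    · simp [hO.2 f f' g g' h₁ h₂ h₃ h₄, hP.2 f f' g g' h₁ h₂ h₃ h₄]
  smul_mem' c O hO := by
    refine ⟨fun f g hfg => ?_, fun f f' g g' h₁ h₂ h₃ h₄ => ?_⟩
    · simp [hO.1 f g hfg]
    · simp [hO.2 f f' g g' h₁ h₂ h₃ h₄]

lemma SupportedOn.mono {O : Module.End ℂ (QState V)} {X Y : Set V} (hO : SupportedOn O X)
    (hXY : X ⊆ Y) : SupportedOn O Y := by
  refine ⟨fun f g ⟨i, hi, hfg⟩ => hO.1 f g ⟨i, fun h => hi (hXY h), hfg⟩,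
    fun f f' g g' hff' hgg' hfg hf'g' => ?_⟩
  by_cases hout : ∃ i ∉ X, f i ≠ g i
  · obtain ⟨i, hiX, hi⟩ := hout
    have hiY : i ∈ Y := by_contra fun hiY => hi (hfg i hiY)
    rw [hO.1 f g ⟨i, hiX, hi⟩, hO.1 f' g' ⟨i, hiX, by rwa [← hff' i hiY, ← hgg' i hiY]⟩]
  · push Not at hout
    refine hO.2 f f' g g' (fun i hi => hff' i (hXY hi)) (fun i hi => hgg' i (hXY hi)) hout
      fun i hi => ?_
    by_cases hiY : i ∈ Y
    · rw [← hff' i hiY, ← hgg' i hiY, hout i hi]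
    · exact hf'g' i hiY

lemma supportedOn_one (X : Set V) : SupportedOn (1 : Module.End ℂ (QState V)) X := by
  refine ⟨fun f g ⟨i, _, hi⟩ => if_neg fun h => hi (congrFun h i).symm,
    fun f f' g g' hff' hgg' hfg hf'g' => ?_⟩
  exact if_congr (eq_iff_eq_of_agree hff' hgg' hfg hf'g') rfl rfl

lemma supportedOn_creOp_mul_annOp (i : V) : SupportedOn (creOp i * annOp i) {i} := by
  refine ⟨fun f g ⟨j, _, hj⟩ => ?_, fun f f' g g' hff' hgg' hfg hf'g' => ?_⟩
  · rw [creOp_mul_annOp_apply, basisVec_apply, if_neg fun h => hj (congrFun h j).symm, ite_self]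
  · rw [creOp_mul_annOp_apply, creOp_mul_annOp_apply, basisVec_apply, basisVec_apply,
      if_congr (eq_iff_eq_of_agree hff' hgg' hfg hf'g') rfl rfl, hgg' i rfl]

lemma SupportedOn.apply_basisVec_update {O : Module.End ℂ (QState V)} {X : Set V}
    (hO : SupportedOn O X) {f g : V → Bool} {j : V} (hj : j ∉ X) (hfg : f j = g j) (b : Bool) :
    O (basisVec (Function.update f j b)) (Function.update g j b) = O (basisVec f) g := by
  by_cases hout : ∃ i ∉ X, f i ≠ g i
  · obtain ⟨i, hiX, hi⟩ := hout
    have hij : i ≠ j := by rintro rfl; exact hi hfg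
    rw [hO.1 f g ⟨i, hiX, hi⟩]
    exact hO.1 _ _ ⟨i, hiX, by simpa [Function.update_of_ne hij] using hi⟩
  · push Not at hout
    refine hO.2 _ _ _ _ (fun i hi => ?_) (fun i hi => ?_) (fun i hi => ?_) hout
    · exact Function.update_of_ne (fun h : i = j => hj (h ▸ hi)) _ _
    · exact Function.update_of_ne (fun h : i = j => hj (h ▸ hi)) _ _
    · by_cases hij : i = j
      · subst hij
        simp
      · simp [Function.update_of_ne hij, hout i hi]

lemma SupportedOn.apply_basisVec_excitedAt {O : Module.End ℂ (QState V)} {X : Set V}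
    (hO : SupportedOn O X) {i : V} (hi : i ∉ X) :
    O (basisVec (excitedAt i)) = creOp i (O (vac V)) := by
  funext g
  rw [creOp_apply]
  by_cases hgi : g i = true
  · have hg : Function.update g i true = g := by rw [← hgi, Function.update_eq_self]
    have key := hO.apply_basisVec_update (f := fun _ => false) (g := Function.update g i false)
      hi (by simp) true
    rw [Function.update_idem, hg] at key
    rw [if_pos hgi]
    exact key
  · rw [if_neg hgi]
    exact hO.1 _ _ ⟨i, hi, by simpa [excitedAt_apply] using Ne.symm hgi⟩

def vacOutside (B : Set V) : Submodule ℂ (QState V) where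
  carrier := {v | ∀ g : V → Bool, (∃ i ∉ B, g i = true) → v g = 0}
  zero_mem' _ _ := rfl
  add_mem' hv hw g hg := by simp [hv g hg, hw g hg]
  smul_mem' c v hv g hg := by simp [hv g hg]

lemma vacOutside_mono {A B : Set V} (h : A ⊆ B) : vacOutside A ≤ vacOutside B :=
  fun _ hv g ⟨i, hi, hgi⟩ => hv g ⟨i, fun hA => hi (h hA), hgi⟩

lemma inf_vacOutside_le (A B : Set V) : vacOutside A ⊓ vacOutside B ≤ vacOutside (A ∩ B) := by
  rintro v ⟨hA, hB⟩ g ⟨i, hi, hgi⟩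
  by_cases hiA : i ∈ A
  · exact hB g ⟨i, fun hiB => hi ⟨hiA, hiB⟩, hgi⟩
  · exact hA g ⟨i, hiA, hgi⟩

lemma creOp_mem_vacOutside {B : Set V} {i : V} (hi : i ∈ B) {v : QState V}
    (hv : v ∈ vacOutside B) : creOp i v ∈ vacOutside B := by
  rintro g ⟨k, hk, hgk⟩
  rw [creOp_apply]
  split_ifs
  · exact hv _ ⟨k, hk, by rwa [Function.update_of_ne fun h : k = i => hk (h ▸ hi)]⟩
  · rfl

lemma SupportedOn.apply_basisVec_mem {O : Module.End ℂ (QState V)} {B : Set V}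
    (hO : SupportedOn O B) {f : V → Bool} (hf : ∀ i ∉ B, f i = false) :
    O (basisVec f) ∈ vacOutside B :=
  fun g ⟨i, hi, hgi⟩ => hO.1 f g ⟨i, hi, by simp [hf i hi, hgi]⟩

def vacOutsidePairs (B : Set V) : Submodule ℂ (QState V × QState V) :=
  (vacOutside B).prod (vacOutside B)

lemma vacOutsidePairs_mono {A B : Set V} (h : A ⊆ B) : vacOutsidePairs A ≤ vacOutsidePairs B :=
  Submodule.prod_mono (vacOutside_mono h) (vacOutside_mono h)

lemma inf_vacOutsidePairs_le (A B : Set V) :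
    vacOutsidePairs A ⊓ vacOutsidePairs B ≤ vacOutsidePairs (A ∩ B) := by
  rintro x ⟨hA, hB⟩
  obtain ⟨hA₁, hA₂⟩ := Submodule.mem_prod.1 hA
  obtain ⟨hB₁, hB₂⟩ := Submodule.mem_prod.1 hB
  exact Submodule.mem_prod.2
    ⟨inf_vacOutside_le A B ⟨hA₁, hB₁⟩, inf_vacOutside_le A B ⟨hA₂, hB₂⟩⟩

/-- On `B` this is `|v⟩⟨b|`, tensored with the identity off `B`
(when `v` is vacuum outside `B`). -/
def localRankOne (B : Finset V) (b : V → Bool) : QState V →ₗ[ℂ] Module.End ℂ (QState V) :=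
  LinearMap.mk₂ ℂ (fun v ψ g => v (B.piecewise g fun _ => false) * ψ (B.piecewise b g))
    (fun _ _ _ => funext fun _ => add_mul _ _ _) (fun _ _ _ => funext fun _ => mul_assoc _ _ _)
    (fun _ _ _ => funext fun _ => mul_add _ _ _) (fun _ _ _ => funext fun _ => mul_left_comm _ _ _)

lemma localRankOne_apply (B : Finset V) (b : V → Bool) (v ψ : QState V) (g : V → Bool) :
    localRankOne B b v ψ g = v (B.piecewise g fun _ => false) * ψ (B.piecewise b g) := rfl

lemma supportedOn_localRankOne (B : Finset V) (b : V → Bool) (v : QState V) :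
    SupportedOn (localRankOne B b v) ↑B := by
  refine ⟨fun f g ⟨i, hi, hfg⟩ => ?_, fun f f' g g' hff' hgg' hfg hf'g' => ?_⟩
  · rw [localRankOne_apply, basisVec_apply, if_neg, mul_zero]
    intro h
    exact hfg (by rw [← h, piecewise_eq_of_notMem _ _ _ hi])
  · have hmask : (B.piecewise g fun _ => false) = B.piecewise g' fun _ => false := by
      funext i
      by_cases hi : i ∈ B
      · simp [hi, hgg' i hi]
      · simp [hi]
    have hbase : B.piecewise b g = f ↔ B.piecewise b g' = f' :=
      eq_iff_eq_of_agree (X := ↑B) hff' (fun i hi => by simp [piecewise_eq_of_mem _ _ _ hi])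
        (fun i hi => by simp [piecewise_eq_of_notMem _ _ _ hi, hfg i hi])
        (fun i hi => by simp [piecewise_eq_of_notMem _ _ _ hi, hf'g' i hi])
    rw [localRankOne_apply, localRankOne_apply, basisVec_apply, basisVec_apply, hmask,
      if_congr hbase rfl rfl]

lemma localRankOne_basisVec_of_ne {B : Finset V} {b : V → Bool} (v : QState V) {f : V → Bool}
    {m : V} (hm : m ∈ B) (hf : f m ≠ b m) : localRankOne B b v (basisVec f) = 0 := by
  funext g
  rw [localRankOne_apply, basisVec_apply, if_neg, mul_zero]
  · rfl
  · intro h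
    exact hf (by rw [← h, piecewise_eq_of_mem _ _ _ hm])

lemma localRankOne_basisVec_self {B : Finset V} {b : V → Bool} {v : QState V}
    (hb : ∀ i ∉ B, b i = false) (hv : v ∈ vacOutside ↑B) :
    localRankOne B b v (basisVec b) = v := by
  funext g
  rw [localRankOne_apply, basisVec_apply]
  by_cases hg : ∀ i ∉ B, g i = false
  · have hmask : (B.piecewise g fun _ => false) = g := by
      funext i
      by_cases hi : i ∈ B <;> simp [hi, hg]
    have hbase : B.piecewise b g = b := by
      funext i
      by_cases hi : i ∈ B <;> simp [hi, hg, hb]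
    rw [hmask, hbase, if_pos rfl, mul_one]
  · push Not at hg
    obtain ⟨i, hi, hgi⟩ := hg
    rw [hv g ⟨i, hi, by simpa using hgi⟩, if_neg, mul_zero]
    intro h
    have := congrFun h i
    rw [piecewise_eq_of_notMem _ _ _ hi, hb i hi] at this
    exact hgi this

/-- The second component is `O|W⟩ - S† O|0̄⟩` rather than `O|W⟩` because, unlike `O|W⟩`,
it is vacuum outside the support of `O` (`SupportedOn.actionData_mem`). -/
def actionData : Module.End ℂ (QState V) →ₗ[ℂ] QState V × QState V where
  toFun O := (O (vac V), O (WState V 1) - Sdag V (O (vac V)))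
  map_add' O P := by
    ext1 <;> simp only [LinearMap.add_apply, map_add, Prod.fst_add, Prod.snd_add]
    abel
  map_smul' c O := by ext1 <;> simp [smul_sub]

lemma actionData_apply (O : Module.End ℂ (QState V)) :
    actionData O = (O (vac V), O (WState V 1) - Sdag V (O (vac V))) := rfl

lemma actionData_eq_zero_iff {O : Module.End ℂ (QState V)} :
    actionData O = 0 ↔ O (vac V) = 0 ∧ O (WState V 1) = 0 := by
  rw [actionData_apply, Prod.ext_iff]
  constructor <;> rintro ⟨h₁, h₂⟩ <;> simp_all

lemma SupportedOn.actionData_snd {O : Module.End ℂ (QState V)} {B : Finset V}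
    (hO : SupportedOn O ↑B) :
    (actionData O).2 = ∑ i ∈ B, (O (basisVec (excitedAt i)) - creOp i (O (vac V))) := by
  rw [actionData_apply, WState_one_eq_sum, map_sum, Sdag, LinearMap.sum_apply,
    ← Finset.sum_sub_distrib]
  exact (Finset.sum_subset (subset_univ B) fun i _ hi => by
    rw [hO.apply_basisVec_excitedAt hi, sub_self]).symm

lemma SupportedOn.actionData_mem {O : Module.End ℂ (QState V)} {B : Finset V}
    (hO : SupportedOn O ↑B) : actionData O ∈ vacOutsidePairs ↑B := by
  refine Submodule.mem_prod.2 ⟨hO.apply_basisVec_mem fun _ _ => rfl, ?_⟩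
  rw [hO.actionData_snd]
  refine sum_mem fun i hi => sub_mem (hO.apply_basisVec_mem fun j hj => ?_)
    (creOp_mem_vacOutside hi (hO.apply_basisVec_mem fun _ _ => rfl))
  simpa [excitedAt_apply] using fun h : j = i => hj (h ▸ hi)

lemma actionData_localRankOne_vac {B : Finset V} {v : QState V} (hv : v ∈ vacOutside ↑B) :
    actionData (localRankOne B (fun _ => false) v) = (v, -∑ i ∈ B, creOp i v) := by
  have hvac : localRankOne B (fun _ => false) v (vac V) = v :=
    localRankOne_basisVec_self (fun _ _ => rfl) hv
  ext1
  · exact hvac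
  · rw [(supportedOn_localRankOne _ _ _).actionData_snd, hvac, ← sum_neg_distrib]
    exact sum_congr rfl fun i hi => by
      rw [localRankOne_basisVec_of_ne v hi (by simp [excitedAt_apply]), zero_sub]

lemma actionData_localRankOne_excitedAt {B : Finset V} {j : V} (hj : j ∈ B) {c : QState V}
    (hc : c ∈ vacOutside ↑B) : actionData (localRankOne B (excitedAt j) c) = (0, c) := by
  have hvac : localRankOne B (excitedAt j) c (vac V) = 0 :=
    localRankOne_basisVec_of_ne c hj (by simp [excitedAt_apply])
  ext1
  · exact hvac
  · rw [(supportedOn_localRankOne _ _ _).actionData_snd, hvac,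
      sum_eq_single_of_mem j hj fun i _ hij => by
        rw [localRankOne_basisVec_of_ne c hj (by simp [excitedAt_apply, Ne.symm hij]), map_zero,
          sub_zero]]
    rw [map_zero, sub_zero, localRankOne_basisVec_self (fun i hi => by
      simpa [excitedAt_apply] using fun h : i = j => hi (h ▸ hj)) hc]

/-- An operator on `B` sending `|0̄⟩` to `x.1` and `|W⟩` to `S† x.1 + x.2`, provided `j ∈ B`
and `x` is vacuum outside `B`. -/
def windowOp (B : Finset V) (j : V) : QState V × QState V →ₗ[ℂ] Module.End ℂ (QState V) :=
  localRankOne B (fun _ => false) ∘ₗ LinearMap.fst ℂ _ _ +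
    localRankOne B (excitedAt j) ∘ₗ
      (LinearMap.snd ℂ _ _ + (∑ i ∈ B, creOp i) ∘ₗ LinearMap.fst ℂ _ _)

lemma windowOp_apply (B : Finset V) (j : V) (x : QState V × QState V) :
    windowOp B j x = localRankOne B (fun _ => false) x.1 +
      localRankOne B (excitedAt j) (x.2 + ∑ i ∈ B, creOp i x.1) := by
  simp [windowOp]

lemma supportedOn_windowOp (B : Finset V) (j : V) (x : QState V × QState V) :
    SupportedOn (windowOp B j x) ↑B := by
  rw [windowOp_apply]
  exact (supportedOps _).add_mem (supportedOn_localRankOne _ _ _) (supportedOn_localRankOne _ _ _)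

lemma actionData_windowOp {B : Finset V} {j : V} (hj : j ∈ B) {x : QState V × QState V}
    (hx : x ∈ vacOutsidePairs ↑B) : actionData (windowOp B j x) = x := by
  obtain ⟨h₁, h₂⟩ := Submodule.mem_prod.1 hx
  rw [windowOp_apply, map_add, actionData_localRankOne_vac h₁,
    actionData_localRankOne_excitedAt hj
      (add_mem h₂ (sum_mem fun i hi => creOp_mem_vacOutside hi h₁))]
  ext1 <;> simp

lemma exists_decomposition_of_sum {ι : Type*} (I : Finset ι)
    (T : ι → Module.End ℂ (QState V)) (X : ι → Finset V) (P : Finset V → Prop)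
    (p : Submodule ℂ (Module.End ℂ (QState V))) (hT : ∀ i ∈ I, SupportedOn (T i) ↑(X i))
    (hP : ∀ i ∈ I, P (X i)) (hp : ∀ i ∈ I, T i ∈ p) :
    ∃ h : Finset V → Module.End ℂ (QState V), (∀ Y, SupportedOn (h Y) ↑Y) ∧
      (∀ Y, h Y ≠ 0 → P Y) ∧ (∀ Y, h Y ∈ p) ∧ ∑ Y, h Y = ∑ i ∈ I, T i := by
  refine ⟨fun Y => ∑ i ∈ I with X i = Y, T i,
    fun Y => (supportedOps _).sum_mem fun i hi => ?_, fun Y hY => ?_,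
    fun Y => p.sum_mem fun i hi => hp i (mem_filter.1 hi).1, sum_fiberwise I X T⟩
  · obtain ⟨hiI, rfl⟩ := mem_filter.1 hi
    exact hT i hiI
  · obtain ⟨i, hi, -⟩ := exists_ne_zero_of_sum_ne_zero hY
    obtain ⟨hiI, rfl⟩ := mem_filter.1 hi
    exact hP i hiI

end Qubits

lemma sum_range_mem_inf_of_sum_eq_zero {R M : Type*} [Ring R] [AddCommGroup M] [Module R M]
    {d : ℕ → M} {p q : Submodule R M} {s n : ℕ} (hsn : s ≤ n)
    (hd : ∑ t ∈ range n, d t = 0) (hp : ∀ t < s, d t ∈ p) (hq : ∀ t, s ≤ t → t < n → d t ∈ q) :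
    ∑ t ∈ range s, d t ∈ p ⊓ q := by
  refine ⟨sum_mem fun t ht => hp t (mem_range.1 ht), ?_⟩
  have hsplit := sum_range_add_sum_Ico d hsn
  rw [hd, add_eq_zero_iff_eq_neg] at hsplit
  rw [hsplit]
  exact neg_mem (sum_mem fun t ht => hq t (mem_Ico.1 ht).1 (mem_Ico.1 ht).2)

section Chain

variable {N : ℕ}

def chainWindow (L s : ℕ) : Finset (Fin N) := {i | s ≤ (i : ℕ) ∧ (i : ℕ) < s + L}

@[simp] lemma mem_chainWindow {L s : ℕ} {i : Fin N} :
    i ∈ chainWindow L s ↔ s ≤ (i : ℕ) ∧ (i : ℕ) < s + L := by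
  simp [chainWindow]

lemma coe_chainWindow_subset {L L' s s' : ℕ} (hs : s' ≤ s) (hL : s + L ≤ s' + L') :
    ((chainWindow L s : Finset (Fin N)) : Set (Fin N)) ⊆
      (chainWindow L' s' : Finset (Fin N)) := by
  intro i
  simp only [mem_coe, mem_chainWindow]
  omega

lemma chainDiamLE_chainWindow {L D : ℕ} (h : L ≤ D) (s : ℕ) :
    ChainDiamLE (chainWindow L s : Finset (Fin N)) D := by
  intro i hi j hj
  simp only [mem_chainWindow] at hi hj
  unfold chainDist
  omega

lemma chainWindow_nonempty {L s : ℕ} (hL : 0 < L) (hs : s < N) :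
    (chainWindow L s : Finset (Fin N)).Nonempty :=
  ⟨⟨s, hs⟩, by simp; omega⟩

end Chain

section WindowDecomposition

variable {N L S : ℕ} [NeZero N] (κ : ℕ → Module.End ℂ (QState (Fin N)))

def windowFlux (s : ℕ) : QState (Fin N) × QState (Fin N) := ∑ t ∈ range s, actionData (κ t)

def windowCorrection (L s : ℕ) : Module.End ℂ (QState (Fin N)) :=
  windowOp (chainWindow L s) (Fin.ofNat N s) (windowFlux κ s)

/-- `κ s`, corrected so that it annihilates `|0̄⟩` and `|W⟩`: it absorbs the action data
accumulated by the windows to its left and hands the new total on to the next window. -/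
def windowTerm (L s : ℕ) : Module.End ℂ (QState (Fin N)) :=
  κ s + windowCorrection κ L s - windowCorrection κ L (s + 1)

variable {κ} (hNS : N = S + L)
  (hκ : ∀ s, SupportedOn (κ s) ↑(chainWindow L s : Finset (Fin N)))
  (hflux : windowFlux κ (S + 1) = 0)

include hNS hκ hflux in
lemma windowFlux_mem {s : ℕ} (hs : s ≤ S) :
    windowFlux κ s ∈ vacOutsidePairs ↑(chainWindow L s : Finset (Fin N)) := by
  have hleft_right := sum_range_mem_inf_of_sum_eq_zero (Nat.le_succ_of_le hs) hflux
    (p := vacOutsidePairs ↑(chainWindow (s + L) 0 : Finset (Fin N)))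
    (q := vacOutsidePairs ↑(chainWindow N s : Finset (Fin N)))
    (fun t ht => vacOutsidePairs_mono (coe_chainWindow_subset (by omega) (by omega))
      (hκ t).actionData_mem)
    (fun t ht ht' => vacOutsidePairs_mono (coe_chainWindow_subset ht (by omega))
      (hκ t).actionData_mem)
  refine vacOutsidePairs_mono ?_ (inf_vacOutsidePairs_le _ _ hleft_right)
  rintro i ⟨hi₁, hi₂⟩
  simp only [mem_coe, mem_chainWindow] at hi₁ hi₂ ⊢
  omega

include hNS hκ hflux in
lemma actionData_windowCorrection (hL : 0 < L) {s : ℕ} (hs : s ≤ S + 1) :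
    actionData (windowCorrection κ L s) = windowFlux κ s := by
  rw [windowCorrection]
  rcases hs.lt_or_eq with hs | rfl
  · refine actionData_windowOp ?_ (windowFlux_mem hNS hκ hflux (by omega))
    simp only [mem_chainWindow, Fin.val_ofNat, Nat.mod_eq_of_lt (by omega : s < N)]
    omega
  · rw [hflux, map_zero, map_zero]

include hκ in
lemma supportedOn_windowTerm (s : ℕ) :
    SupportedOn (windowTerm κ L s) ↑(chainWindow (L + 1) s : Finset (Fin N)) := by
  have hleft := coe_chainWindow_subset (N := N) (L := L) (L' := L + 1) (le_refl s) (by omega)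
  have hright := coe_chainWindow_subset (N := N) (L := L) (L' := L + 1) (Nat.le_succ s) (by omega)
  exact (supportedOps _).sub_mem
    ((supportedOps _).add_mem ((hκ s).mono hleft) ((supportedOn_windowOp _ _ _).mono hleft))
    ((supportedOn_windowOp _ _ _).mono hright)

include hNS hκ hflux in
lemma actionData_windowTerm (hL : 0 < L) {s : ℕ} (hs : s ≤ S) :
    actionData (windowTerm κ L s) = 0 := by
  rw [windowTerm, map_sub, map_add, actionData_windowCorrection hNS hκ hflux hL (by omega),
    actionData_windowCorrection hNS hκ hflux hL (by omega), windowFlux, windowFlux,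
    sum_range_succ]
  abel

include hflux in
lemma sum_windowTerm :
    ∑ s ∈ range (S + 1), windowTerm κ L s = ∑ s ∈ range (S + 1), κ s := by
  simp only [windowTerm, add_sub_assoc, sum_add_distrib]
  rw [sum_range_sub', windowCorrection, windowCorrection, hflux, windowFlux, range_zero, sum_empty,
    map_zero, map_zero, sub_zero, add_zero]

include hNS hκ in
theorem exists_decomposition_of_windowSum (hL : 0 < L)
    (hK : actionData (∑ s ∈ range (S + 1), κ s) = 0) :
    ∃ h : Finset (Fin N) → Module.End ℂ (QState (Fin N)), (∀ X, SupportedOn (h X) ↑X) ∧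
      (∀ X, h X ≠ 0 → X.Nonempty ∧ ChainDiamLE X (L + 1)) ∧
      (∀ X, actionData (h X) = 0) ∧ ∑ X, h X = ∑ s ∈ range (S + 1), κ s := by
  have hflux : windowFlux κ (S + 1) = 0 := by rw [windowFlux, ← map_sum, hK]
  obtain ⟨h, hsupp, hdiam, hker, hsum⟩ := exists_decomposition_of_sum (range (S + 1))
    (windowTerm κ L) (chainWindow (L + 1)) (fun X => X.Nonempty ∧ ChainDiamLE X (L + 1))
    (LinearMap.ker actionData) (fun s _ => supportedOn_windowTerm hκ s)
    (fun s hs => ⟨chainWindow_nonempty (by omega) (by simp at hs; omega),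
      chainDiamLE_chainWindow le_rfl s⟩)
    (fun s hs => actionData_windowTerm hNS hκ hflux hL (by simp at hs; omega))
  exact ⟨h, hsupp, hdiam, hker, hsum.trans (sum_windowTerm hflux)⟩

end WindowDecomposition

section RangeHamiltonian

variable {N R : ℕ}

lemma chainDist_comm (i j : Fin N) : chainDist i j = chainDist j i := by
  unfold chainDist
  omega

lemma ChainDiamLE.not_mem_of_le_chainDist {X : Finset (Fin N)} (hX : ChainDiamLE X R)
    {t j : Fin N} (ht : t ∈ X) (htj : R ≤ chainDist t j) : j ∉ X := fun hj => by
  have := hX t ht j hj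
  omega

variable (N R) in
def chainRangeHams : Submodule ℂ (Module.End ℂ (QState (Fin N))) where
  carrier := {H | IsChainRangeHam R H}
  zero_mem' := ⟨0, fun _ => (supportedOps _).zero_mem, fun _ h => absurd rfl h, by simp⟩
  add_mem' := by
    rintro _ _ ⟨h₁, hs₁, hr₁, rfl⟩ ⟨h₂, hs₂, hr₂, rfl⟩
    refine ⟨h₁ + h₂, fun X => (supportedOps _).add_mem (hs₁ X) (hs₂ X), fun X hX => ?_,
      by simp [sum_add_distrib]⟩
    by_cases h : h₁ X = 0
    · exact hr₂ X (by simpa [h] using hX)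
    · exact hr₁ X h
  smul_mem' := by
    rintro c _ ⟨h, hs, hr, rfl⟩
    exact ⟨c • h, fun X => (supportedOps _).smul_mem c (hs X),
      fun X hX => hr X fun h0 => hX (by simp [h0]), by simp [smul_sum]⟩

lemma mem_chainRangeHams_of_supportedOn_singleton (hR : 0 < R)
    {O : Module.End ℂ (QState (Fin N))} {i : Fin N} (hO : SupportedOn O {i}) :
    O ∈ chainRangeHams N R := by
  refine ⟨fun X => if X = {i} then O else 0, fun X => ?_, fun X hX => ?_, by simp⟩
  · dsimp only
    split_ifs with h
    · rw [h, coe_singleton]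
      exact hO
    · exact (supportedOps _).zero_mem
  · dsimp only at hX
    split_ifs at hX with h
    · subst h
      refine ⟨singleton_nonempty i, fun a ha b hb => ?_⟩
      rw [mem_singleton] at ha hb
      subst ha hb
      unfold chainDist
      omega
    · exact absurd rfl hX

lemma numOp_mem_chainRangeHams (hR : 0 < R) : numOp (Fin N) ∈ chainRangeHams N R :=
  sum_mem fun i _ => mem_chainRangeHams_of_supportedOn_singleton hR (supportedOn_creOp_mul_annOp i)

lemma one_mem_chainRangeHams [NeZero N] (hR : 0 < R) :
    (1 : Module.End ℂ (QState (Fin N))) ∈ chainRangeHams N R :=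
  mem_chainRangeHams_of_supportedOn_singleton hR (supportedOn_one {0})

lemma IsChainRangeHam.exists_windowSum {L S : ℕ} {K : Module.End ℂ (QState (Fin N))}
    (hK : IsChainRangeHam R K) (hRL : R ≤ L) (hNS : N = S + L) :
    ∃ κ : ℕ → Module.End ℂ (QState (Fin N)),
      (∀ s, SupportedOn (κ s) ↑(chainWindow L s : Finset (Fin N))) ∧
      ∑ s ∈ range (S + 1), κ s = K := by
  obtain ⟨h, hsupp, hrange, rfl⟩ := hK
  -- each term goes to the window ending at the rightmost site of its support
  let σ : Finset (Fin N) → ℕ := fun X => X.sup (fun i => (i : ℕ)) - (L - 1)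
  refine ⟨fun s => ∑ X with σ X = s, h X,
    fun s => (supportedOps _).sum_mem fun X hX => ?_, ?_⟩
  · obtain rfl := (mem_filter.1 hX).2
    by_cases hX0 : h X = 0
    · rw [hX0]
      exact (supportedOps _).zero_mem
    obtain ⟨hne, hdiam⟩ := hrange X hX0
    obtain ⟨m, hm, hmax⟩ := exists_mem_eq_sup X hne (fun i => (i : ℕ))
    refine (hsupp X).mono fun x hx => ?_
    have hxm : (x : ℕ) ≤ X.sup (fun i => (i : ℕ)) := le_sup (f := fun i : Fin N => (i : ℕ)) hx
    have hdist := hdiam x hx m hm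
    simp only [mem_coe, mem_chainWindow, σ]
    unfold chainDist at hdist
    omega
  · refine sum_fiberwise_of_maps_to (fun X _ => mem_range.2 ?_) h
    have : X.sup (fun i => (i : ℕ)) ≤ N - 1 := Finset.sup_le fun i _ => by omega
    simp only [σ]
    omega

variable {H : Module.End ℂ (QState (Fin N))}

lemma IsChainRangeHam.apply_basisVec_eq_zero (hH : IsChainRangeHam R H) {f g : Fin N → Bool}
    {u v : Fin N} (hu : f u ≠ g u) (hv : f v ≠ g v) (huv : R ≤ chainDist u v) :
    H (basisVec f) g = 0 := by
  obtain ⟨h, hsupp, hrange, rfl⟩ := hH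
  rw [LinearMap.sum_apply, Finset.sum_apply]
  refine sum_eq_zero fun X _ => ?_
  by_cases hX : h X = 0
  · simp [hX]
  by_cases huX : u ∈ X
  · exact (hsupp X).1 f g ⟨v, (hrange X hX).2.not_mem_of_le_chainDist huX huv, hv⟩
  · exact (hsupp X).1 f g ⟨u, huX, hu⟩

lemma IsChainRangeHam.apply_basisVec_update (hH : IsChainRangeHam R H) {f g : Fin N → Bool}
    {t j : Fin N} (ht : f t ≠ g t) (hj : f j = g j) (htj : R ≤ chainDist t j) (b : Bool) :
    H (basisVec (Function.update f j b)) (Function.update g j b) = H (basisVec f) g := by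
  obtain ⟨h, hsupp, hrange, rfl⟩ := hH
  simp only [LinearMap.sum_apply, Finset.sum_apply]
  refine sum_congr rfl fun X _ => ?_
  by_cases hX : h X = 0
  · simp [hX]
  by_cases htX : t ∈ X
  · exact (hsupp X).apply_basisVec_update ((hrange X hX).2.not_mem_of_le_chainDist htX htj) hj b
  · have htj' : t ≠ j := by
      rintro rfl
      exact ht hj
    rw [(hsupp X).1 f g ⟨t, htX, ht⟩]
    exact (hsupp X).1 _ _ ⟨t, htX, by simpa [Function.update_of_ne htj'] using ht⟩

variable {lam : ℂ}

lemma IsChainRangeHam.apply_excitedAt_add_apply_excitedAt (hH : IsChainRangeHam R H)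
    (hR : 0 < R) (hW : H (WState (Fin N) 1) = lam • WState (Fin N) 1) {g : Fin N → Bool}
    {j t : Fin N} (hj : g j = true) (ht : g t = true) (hjt : R ≤ chainDist j t) :
    H (basisVec (excitedAt j)) g + H (basisVec (excitedAt t)) g = 0 := by
  have hne : j ≠ t := by
    rintro rfl
    unfold chainDist at hjt
    omega
  have heig : ∑ i, H (basisVec (excitedAt i)) g = 0 := by
    rw [← Finset.sum_apply, ← map_sum, ← WState_one_eq_sum, hW, Pi.smul_apply,
      WState_one_apply_eq_zero hj ht hne, smul_zero]
  rwa [Fintype.sum_eq_add j t hne fun i ⟨hij, hit⟩ => hH.apply_basisVec_eq_zero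
    (by simp [excitedAt_apply, Ne.symm hij, hj]) (by simp [excitedAt_apply, Ne.symm hit, ht]) hjt]
    at heig

lemma IsChainRangeHam.apply_vac_excitedAt_add (hH : IsChainRangeHam R H) (hR : 0 < R)
    (hW : H (WState (Fin N) 1) = lam • WState (Fin N) 1) {j t : Fin N}
    (hjt : R ≤ chainDist j t) :
    H (vac (Fin N)) (excitedAt j) + H (vac (Fin N)) (excitedAt t) = 0 := by
  have hne : j ≠ t := by
    rintro rfl
    unfold chainDist at hjt
    omega
  have hpair := hH.apply_excitedAt_add_apply_excitedAt hR hW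
    (g := Function.update (excitedAt t) j true) (j := j) (t := t) (by simp)
    (by simp [Function.update_of_ne hne.symm, excitedAt_apply]) hjt
  have hflip_j : H (basisVec (excitedAt j)) (Function.update (excitedAt t) j true)
      = H (vac (Fin N)) (excitedAt t) :=
    hH.apply_basisVec_update (f := fun _ => false) (g := excitedAt t) (t := t) (j := j)
      (by simp [excitedAt_apply]) (by simp [excitedAt_apply, hne]) (by rwa [chainDist_comm]) true
  have hflip_t : H (basisVec (excitedAt t)) (Function.update (excitedAt j) t true)
      = H (vac (Fin N)) (excitedAt j) :=
    hH.apply_basisVec_update (f := fun _ => false) (g := excitedAt j) (t := j) (j := t)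
      (by simp [excitedAt_apply]) (by simp [excitedAt_apply, hne.symm]) hjt true
  have hcomm : Function.update (excitedAt t) j true = Function.update (excitedAt j) t true := by
    unfold excitedAt
    exact Function.update_comm hne.symm _ _ _
  rw [← hcomm] at hflip_t
  linear_combination hpair - hflip_j - hflip_t

lemma exists_far_pair (hbig : 4 * R < N) (t : Fin N) :
    ∃ j k : Fin N, chainDist t j = R ∧ chainDist j k = R ∧ chainDist t k = 2 * R := by
  by_cases ht : (t : ℕ) < 2 * R
  · exact ⟨⟨t + R, by omega⟩, ⟨t + 2 * R, by omega⟩, by simp only [chainDist]; omega⟩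
  · exact ⟨⟨t - R, by omega⟩, ⟨t - 2 * R, by omega⟩, by simp only [chainDist]; omega⟩

lemma IsChainRangeHam.apply_vac_excitedAt (hH : IsChainRangeHam R H) (hR : 0 < R)
    (hbig : 4 * R < N) (hW : H (WState (Fin N) 1) = lam • WState (Fin N) 1) (t : Fin N) :
    H (vac (Fin N)) (excitedAt t) = 0 := by
  obtain ⟨j, k, htj, hjk, htk⟩ := exists_far_pair hbig t
  have h₁ := hH.apply_vac_excitedAt_add hR hW htj.ge
  have h₂ := hH.apply_vac_excitedAt_add hR hW hjk.ge
  have h₃ := hH.apply_vac_excitedAt_add hR hW (show R ≤ chainDist t k by omega)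
  linear_combination (h₁ - h₂ + h₃) / 2

lemma IsChainRangeHam.apply_vac_of_two_excitations (hH : IsChainRangeHam R H) (hR : 0 < R)
    (hbig : 4 * R < N) (hW : H (WState (Fin N) 1) = lam • WState (Fin N) 1) {g : Fin N → Bool}
    {t₀ t₁ : Fin N} (h₀ : g t₀ = true) (h₁ : g t₁ = true) (hne : t₀ ≠ t₁) :
    H (vac (Fin N)) g = 0 := by
  by_cases hfar : R ≤ chainDist t₀ t₁
  · exact hH.apply_basisVec_eq_zero (f := fun _ => false) (by simp [h₀]) (by simp [h₁]) hfar
  -- Excite a site `k` far from `t₀`: the pair relation for `k, t₀` then links `H|0̄⟩` at `g`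
  -- to a matrix element that vanishes because `t₁` is also far from `k`.
  obtain ⟨-, k, -, -, hk⟩ := exists_far_pair hbig t₀
  cases hgk : g k
  · have hkt₀ : k ≠ t₀ := by
      rintro rfl
      unfold chainDist at hk
      omega
    have hkt₁ : k ≠ t₁ := by
      rintro rfl
      simp [h₁] at hgk
    have hflip : H (basisVec (excitedAt k)) (Function.update g k true) = H (vac (Fin N)) g :=
      hH.apply_basisVec_update (f := fun _ => false) (t := t₀) (by simp [h₀]) (by simp [hgk])
        (by omega) true
    have hpair := hH.apply_excitedAt_add_apply_excitedAt hR hW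
      (g := Function.update g k true) (j := k) (t := t₀) (by simp)
      (by simp [Function.update_of_ne hkt₀.symm, h₀]) (by rw [chainDist_comm]; omega)
    have hkill : H (basisVec (excitedAt t₀)) (Function.update g k true) = 0 :=
      hH.apply_basisVec_eq_zero (u := k) (v := t₁) (by simp [excitedAt_apply, hkt₀])
        (by simp [excitedAt_apply, Function.update_of_ne hkt₁.symm, h₁, hne.symm])
        (by unfold chainDist at hfar hk ⊢; omega)
    linear_combination hpair - hflip - hkill
  · exact hH.apply_basisVec_eq_zero (f := fun _ => false) (u := t₀) (v := k) (by simp [h₀])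
      (by simp [hgk]) (by omega)

lemma IsChainRangeHam.apply_vac (hH : IsChainRangeHam R H) (hR : 0 < R) (hbig : 4 * R < N)
    (hW : H (WState (Fin N) 1) = lam • WState (Fin N) 1) :
    H (vac (Fin N)) = H (vac (Fin N)) (fun _ => false) • vac (Fin N) := by
  funext g
  by_cases hg : g = fun _ => false
  · subst hg
    simp [vac, basisVec_apply]
  show H (vac (Fin N)) g = H (vac (Fin N)) (fun _ => false) * basisVec (fun _ => false) g
  rw [basisVec_apply, if_neg hg, mul_zero]
  obtain ⟨t, ht⟩ : ∃ t, g t = true := by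
    by_contra h
    push Not at h
    exact hg (funext fun i => by simpa using h i)
  by_cases hmany : ∃ t', g t' = true ∧ t' ≠ t
  · obtain ⟨t', ht', hne⟩ := hmany
    exact hH.apply_vac_of_two_excitations hR hbig hW ht ht' hne.symm
  · push Not at hmany
    rw [eq_excitedAt_of_forall ht hmany]
    exact hH.apply_vac_excitedAt hR hbig hW t

end RangeHamiltonian

end

theorem W_parent_decomposition_1D_general
    (R N : ℕ) (hR : 0 < R) (hbig : 4 * R < N)
    (H : Module.End ℂ (QState (Fin N))) (lam : ℂ)
    (hH : IsChainRangeHam R H)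
    (hW : H (WState (Fin N) 1) = lam • WState (Fin N) 1) :
    ∃ (Ω ω : ℂ) (h : Finset (Fin N) → Module.End ℂ (QState (Fin N))),
      (∀ X, SupportedOn (h X) ↑X) ∧
      (∀ X, h X ≠ 0 → X.Nonempty ∧ ChainDiamLE X (2 * R)) ∧
      (∀ X, h X (WState (Fin N) 1) = 0 ∧ h X (vac (Fin N)) = 0) ∧
      H = Ω • (1 : Module.End ℂ (QState (Fin N))) + ω • numOp (Fin N)
            + ∑ X : Finset (Fin N), h X := by
  have : NeZero N := ⟨by omega⟩
  set Ω := H (vac (Fin N)) (fun _ => false)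
  have hvac : H (vac (Fin N)) = Ω • vac (Fin N) := hH.apply_vac hR hbig hW
  set K := H - Ω • (1 : Module.End ℂ (QState (Fin N))) - (lam - Ω) • numOp (Fin N) with hK
  have hKrange : IsChainRangeHam R K := (chainRangeHams N R).sub_mem
    ((chainRangeHams N R).sub_mem hH ((chainRangeHams N R).smul_mem _ (one_mem_chainRangeHams hR)))
    ((chainRangeHams N R).smul_mem _ (numOp_mem_chainRangeHams hR))
  have hKdata : actionData K = 0 := actionData_eq_zero_iff.2
    ⟨by simp [K, hvac, numOp_vac], by simp [K, hW, numOp_WState_one, sub_smul]⟩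
  have hNS : N = (N - R) + R := by omega
  obtain ⟨κ, hκ, hκK⟩ := hKrange.exists_windowSum le_rfl hNS
  rw [← hκK] at hKdata
  obtain ⟨h, hsupp, hdiam, hdata, hsum⟩ := exists_decomposition_of_windowSum hNS hκ hR hKdata
  refine ⟨Ω, lam - Ω, h, hsupp, fun X hX => ?_,
    fun X => (actionData_eq_zero_iff.1 (hdata X)).symm, ?_⟩
  · obtain ⟨hne, hXdiam⟩ := hdiam X hX
    exact ⟨hne, fun i hi j hj => (hXdiam i hi j hj).trans (by omega)⟩
  · rw [hsum, hκK, hK]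
    abel

/-- Decomposition of a range-R parent Hamiltonian of the W state on the
open chain of N > 4R qubit sites. -/
theorem W_parent_decomposition_1D
    (R N : ℕ) (hR : 0 < R) (hN : 0 < N) (hbig : 4 * R < N)
    (H : Module.End ℂ (QState (Fin N))) (lam : ℂ)
    (hH : IsChainRangeHam R H)
    (hW : H (WState (Fin N) 1) = lam • WState (Fin N) 1) :
    ∃ (Ω ω : ℂ) (h : Finset (Fin N) → Module.End ℂ (QState (Fin N))),
      (∀ X, SupportedOn (h X) ↑X) ∧
      (∀ X, h X ≠ 0 → X.Nonempty ∧ ChainDiamLE X (2 * R)) ∧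
      (∀ X, h X (WState (Fin N) 1) = 0 ∧ h X (vac (Fin N)) = 0) ∧
      H = Ω • (1 : Module.End ℂ (QState (Fin N))) + ω • numOp (Fin N)
            + ∑ X : Finset (Fin N), h X :=
  W_parent_decomposition_1D_general R N hR hbig H lam hH hW
end

section
/- Let G be a connected finite simple graph on N vertices in which every vertex has degree at most Δ, and let k, R be positive integers with N > 2k(Δ^{4R}+1). Let H be a k-local Hamiltonian of range R with respect to G such that for every 0 ≤ p ≤ N there is E_p ∈ ℂ with H |W^p⟩ = E_p |W^p⟩. Then there exist Ω, ω ∈ ℂ such that E_p = Ω + ω·p for all 0 ≤ p ≤ N. -/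
open scoped BigOperators
set_option linter.unusedSectionVars false

/-!
Evaluating `H |W^p⟩ = E_p |W^p⟩` at the basis configuration of a set `S` of `p` sites gives
`E_{|S|} = ∑_X w_X (S ∩ X)`, where `w_X` only depends on the term `h_X` and on the occupied
sites inside `X` (`localWeight`). Adding a site `j ∉ S` therefore changes the energy by an
amount that only depends on `S ∩ B_j(R - 1)`, since every `X ∋ j` lies in that ball. The ball
`B_{j₁}(2R - 2)` has at most `Δ^{4R} + 1 < N` sites, so some `j₂` is at distance more than
`2R - 2` from `j₁` and the balls of radius `R - 1` around them are disjoint. For `j₁ ∉ S`, the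
increment at `S` equals the one at `S ∩ B_{j₁}(R - 1)`, which (looking from `j₂`) equals the
one at `∅`, i.e. `E₁ - E₀`. Every `p < N` is the size of such an `S`.
-/

open Finset

section Configurations

variable {V : Type*} [DecidableEq V]

def configOf (T : Finset V) : V → Bool := fun v => decide (v ∈ T)

@[simp] lemma configOf_apply (T : Finset V) (v : V) : configOf T v = decide (v ∈ T) := rfl

lemma configOf_erase (T : Finset V) (i : V) :
    Function.update (configOf T) i false = configOf (T.erase i) := by
  ext v
  by_cases hv : v = i <;> simp [hv, Function.update_of_ne]

lemma configOf_eq_const_false_iff {T : Finset V} : configOf T = (fun _ => false) ↔ T = ∅ := by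
  simp [funext_iff, eq_empty_iff_forall_notMem]

variable [Fintype V]

lemma configOf_bijective : Function.Bijective (configOf (V := V)) := by
  refine ⟨fun T T' h => ext fun v => by simpa using congrFun h v, fun f => ?_⟩
  exact ⟨({v | f v = true} : Finset V), funext fun v => by cases h : f v <;> simp [h]⟩

lemma sum_configs_eq_sum_finset {M : Type*} [AddCommMonoid M] (φ : (V → Bool) → M) :
    ∑ f, φ f = ∑ T : Finset V, φ (configOf T) :=
  (Fintype.sum_bijective _ configOf_bijective _ _ fun _ => rfl).symm

lemma apply_eq_sum_configOf (O : Module.End ℂ (QState V)) (ψ : QState V) (g : V → Bool) :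
    O ψ g = ∑ T : Finset V, ψ (configOf T) * O (basisVec (configOf T)) g := by
  rw [O.pi_apply_eq_sum_univ ψ, Finset.sum_apply, sum_configs_eq_sum_finset]
  refine sum_congr rfl fun T _ => ?_
  have : (fun j => if configOf T = j then (1 : ℂ) else 0) = basisVec (configOf T) := by
    ext j; simp [basisVec, eq_comm]
  simp only [Pi.smul_apply, smul_eq_mul, this]

lemma Sdag_apply_configOf (ψ : QState V) (T : Finset V) :
    Sdag V ψ (configOf T) = ∑ i ∈ T, ψ (configOf (T.erase i)) := by
  simp [Sdag, LinearMap.sum_apply, Finset.sum_apply, configOf_erase]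

lemma WState_apply_configOf (p : ℕ) (T : Finset V) :
    WState V p (configOf T) = if #T = p then (p.factorial : ℂ) else 0 := by
  induction p generalizing T with
  | zero =>
    simp [WState, vac, basisVec, configOf_eq_const_false_iff]
  | succ p ih =>
    rw [WState, pow_succ', Module.End.mul_apply, ← WState, Sdag_apply_configOf]
    rcases T.eq_empty_or_nonempty with rfl | hT
    · simp
    rw [sum_congr rfl fun i hi => by rw [ih, card_erase_of_mem hi], sum_const, nsmul_eq_mul]
    have := hT.card_pos
    split_ifs <;> first | omega | simp_all [Nat.factorial_succ]

end Configurations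

section Locality

variable {V : Type*} [Fintype V] [DecidableEq V]

lemma SupportedOn.apply_configOf {O : Module.End ℂ (QState V)} {X : Finset V}
    (hO : SupportedOn O ↑X) (T S : Finset V) :
    O (basisVec (configOf T)) (configOf S) =
      if T \ X = S \ X then O (basisVec (configOf (T ∩ X))) (configOf (S ∩ X)) else 0 := by
  split_ifs with h
  · have hout : ∀ i ∉ X, (i ∈ T ↔ i ∈ S) := fun i hi => by
      simpa [hi] using Finset.ext_iff.mp h i
    apply hO.2 <;> intro i hi <;> simp_all
  · apply hO.1
    obtain ⟨i, hi⟩ : ∃ i, ¬(i ∈ T \ X ↔ i ∈ S \ X) := by simpa [Finset.ext_iff] using h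
    by_cases hiX : i ∈ X
    · simp [hiX] at hi
    · exact ⟨i, hiX, by simpa [hiX] using hi⟩

def localWeight (O : Module.End ℂ (QState V)) (X A : Finset V) : ℂ :=
  ∑ B ∈ X.powersetCard #A, O (basisVec (configOf B)) (configOf A)

lemma SupportedOn.apply_WState_configOf {O : Module.End ℂ (QState V)} {X : Finset V}
    (hO : SupportedOn O ↑X) (S : Finset V) :
    O (WState V #S) (configOf S) = (#S).factorial * localWeight O X (S ∩ X) := by
  rw [apply_eq_sum_configOf, localWeight, mul_sum]
  rw [sum_congr rfl fun T _ => by rw [WState_apply_configOf, hO.apply_configOf]]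
  simp_rw [ite_mul, zero_mul, mul_ite, mul_zero]
  rw [← sum_filter, ← sum_filter]
  refine sum_nbij' (· ∩ X) (· ∪ S \ X) ?_ ?_ ?_ ?_ ?_
  all_goals
    intro T hT
    simp only [univ_filter_card_eq, mem_filter, mem_powersetCard, subset_univ, true_and] at hT ⊢
  · have := card_inter_add_card_sdiff T X
    have := card_inter_add_card_sdiff S X
    grind
  · have := card_inter_add_card_sdiff S X
    have hdisj : Disjoint T (S \ X) := disjoint_sdiff.mono_left hT.1
    grind [card_union_of_disjoint, union_sdiff_distrib]
  · grind
  · grind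

end Locality

section Spacing

variable {V : Type*} [Fintype V] [DecidableEq V]

lemma eigenvalue_eq_sum_localWeight {h : Finset V → Module.End ℂ (QState V)}
    (hsupp : ∀ X, SupportedOn (h X) ↑X) {E : ℕ → ℂ} {S : Finset V}
    (hS : (∑ X, h X) (WState V #S) = E #S • WState V #S) :
    E #S = ∑ X, localWeight (h X) X (S ∩ X) := by
  have hS := congrFun hS (configOf S)
  simp only [LinearMap.sum_apply, Finset.sum_apply, (hsupp _).apply_WState_configOf,
    Pi.smul_apply, WState_apply_configOf, if_pos, smul_eq_mul, ← mul_sum] at hS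
  exact (mul_left_cancel₀ (Nat.cast_ne_zero.mpr (Nat.factorial_ne_zero _))
    (hS.trans (mul_comm _ _))).symm

lemma eigenvalue_increment_eq_of_inter_eq {h : Finset V → Module.End ℂ (QState V)}
    (hsupp : ∀ X, SupportedOn (h X) ↑X) {E : ℕ → ℂ}
    (hE : ∀ S : Finset V, (∑ X, h X) (WState V #S) = E #S • WState V #S)
    {j : V} {B : Finset V} (hB : ∀ X, h X ≠ 0 → j ∈ X → X ⊆ B)
    {S S' : Finset V} (hS : j ∉ S) (hS' : j ∉ S') (hSS' : S ∩ B = S' ∩ B) :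
    E (#S + 1) - E #S = E (#S' + 1) - E #S' := by
  rw [← card_insert_of_notMem hS, ← card_insert_of_notMem hS']
  simp only [eigenvalue_eq_sum_localWeight hsupp (hE _), ← sum_sub_distrib]
  refine sum_congr rfl fun X _ => ?_
  by_cases hX : h X = 0
  · simp [localWeight, hX]
  by_cases hjX : j ∈ X
  · have hXB := hB X hX hjX
    have : S ∩ X = S' ∩ X := by
      rw [← inter_eq_right.mpr hXB, ← inter_assoc, hSS', inter_assoc]
    rw [insert_inter_of_mem hjX, insert_inter_of_mem hjX, this]
  · simp [insert_inter_of_notMem hjX]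

lemma succ_sub_eq_one_sub_zero_of_local {M : Type*} [AddCommGroup M] {E : ℕ → M}
    {B : V → Finset V} (hmem : ∀ j, j ∈ B j)
    (hloc : ∀ j S S', j ∉ S → j ∉ S' → S ∩ B j = S' ∩ B j →
      E (#S + 1) - E #S = E (#S' + 1) - E #S')
    {j₁ j₂ : V} (hdisj : Disjoint (B j₁) (B j₂)) {p : ℕ} (hp : p < Fintype.card V) :
    E (p + 1) - E p = E 1 - E 0 := by
  obtain ⟨S, hS, rfl⟩ : ∃ S ⊆ univ.erase j₁, #S = p :=
    exists_subset_card_eq (by rw [card_erase_of_mem (mem_univ _), card_univ]; omega)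
  have hj₁ : j₁ ∉ S := fun h => by simpa using hS h
  have hj₂ : j₂ ∉ S ∩ B j₁ := fun h =>
    disjoint_left.mp hdisj (mem_inter.mp h).2 (hmem j₂)
  calc E (#S + 1) - E #S = E (#(S ∩ B j₁) + 1) - E #(S ∩ B j₁) :=
        hloc j₁ _ _ hj₁ (fun h => hj₁ (mem_inter.mp h).1) (by rw [inter_assoc, inter_self])
    _ = E (#(∅ : Finset V) + 1) - E #(∅ : Finset V) :=
        hloc j₂ _ _ hj₂ (notMem_empty _) (by
          rw [inter_assoc, disjoint_iff_inter_eq_empty.mp hdisj, inter_empty, empty_inter])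
    _ = E 1 - E 0 := by simp

lemma eq_add_nsmul_of_forall_sub_eq {M : Type*} [AddCommGroup M] {E : ℕ → M} {d : M} {n : ℕ}
    (h : ∀ p < n, E (p + 1) - E p = d) {p : ℕ} (hp : p ≤ n) : E p = E 0 + p • d := by
  rw [eq_sum_range_sub E p, sum_congr rfl fun i hi => h i ((mem_range.mp hi).trans_le hp),
    sum_const, card_range]

end Spacing

lemma card_neighborFinset_le {V : Type*} {G : SimpleGraph V} {Δ : ℕ}
    (hdeg : ∀ v, (G.neighborSet v).ncard ≤ Δ) (v : V) [Fintype (G.neighborSet v)] :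
    #(G.neighborFinset v) ≤ Δ := by
  rw [SimpleGraph.neighborFinset_def, ← Set.ncard_eq_toFinset_card']
  exact hdeg v

section Balls

variable {V : Type*} [Fintype V] {G : SimpleGraph V}

open Classical in
noncomputable def gballFinset (G : SimpleGraph V) (i : V) (r : ℕ) : Finset V :=
  {j | WithinDist G r i j}

lemma mem_gballFinset {i j : V} {r : ℕ} : j ∈ gballFinset G i r ↔ WithinDist G r i j := by
  simp [gballFinset]

lemma mem_gballFinset_self (i : V) (r : ℕ) : i ∈ gballFinset G i r :=
  mem_gballFinset.mpr ⟨.nil, Nat.zero_le r⟩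

lemma GDiamLE.subset_gballFinset {X : Finset V} {R : ℕ} (hX : GDiamLE G X R)
    {i : V} (hi : i ∈ X) : X ⊆ gballFinset G i (R - 1) :=
  fun _ hj => mem_gballFinset.mpr (hX i hi _ hj)

lemma disjoint_gballFinset {i j : V} {r : ℕ} (h : ¬WithinDist G (r + r) i j) :
    Disjoint (gballFinset G i r) (gballFinset G j r) := by
  refine disjoint_left.mpr fun v hi hj => h ?_
  obtain ⟨w₁, hw₁⟩ := mem_gballFinset.mp hi
  obtain ⟨w₂, hw₂⟩ := mem_gballFinset.mp hj
  exact ⟨w₁.append w₂.reverse, by simp; omega⟩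

lemma card_gballFinset_le_pow {Δ : ℕ} (hdeg : ∀ v, (G.neighborSet v).ncard ≤ Δ) (i : V)
    (r : ℕ) : #(gballFinset G i r) ≤ (Δ + 1) ^ r := by
  classical
  induction r generalizing i with
  | zero =>
    refine card_le_one.mpr fun a ha b hb => ?_
    obtain ⟨wa, hwa⟩ := mem_gballFinset.mp ha
    obtain ⟨wb, hwb⟩ := mem_gballFinset.mp hb
    rw [← wa.eq_of_length_eq_zero (by omega), ← wb.eq_of_length_eq_zero (by omega)]
  | succ r ih =>
    have hsub : gballFinset G i (r + 1) ⊆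
        insert i ((G.neighborFinset i).biUnion fun u => gballFinset G u r) := by
      intro v hv
      obtain ⟨w, hw⟩ := mem_gballFinset.mp hv
      cases w with
      | nil => exact mem_insert_self _ _
      | cons hadj w =>
        refine mem_insert_of_mem (mem_biUnion.mpr ⟨_, (G.mem_neighborFinset _ _).mpr hadj, ?_⟩)
        exact mem_gballFinset.mpr ⟨w, by simp at hw; omega⟩
    calc #(gballFinset G i (r + 1))
        ≤ #((G.neighborFinset i).biUnion fun u => gballFinset G u r) + 1 :=
          (card_le_card hsub).trans (card_insert_le _ _)
      _ ≤ ∑ u ∈ G.neighborFinset i, #(gballFinset G u r) + 1 := by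
          gcongr; exact card_biUnion_le
      _ ≤ Δ * (Δ + 1) ^ r + 1 := by
          gcongr
          exact (sum_le_card_nsmul _ _ _ fun u _ => ih u).trans
            (by rw [smul_eq_mul]; gcongr; exact card_neighborFinset_le hdeg i)
      _ ≤ (Δ + 1) ^ (r + 1) := by
          rw [pow_succ]; nlinarith [Nat.one_le_pow r (Δ + 1) (Nat.succ_pos Δ)]

lemma SimpleGraph.Walk.eq_or_adj_of_ncard_neighborSet_le_one
    (hdeg : ∀ v, (G.neighborSet v).ncard ≤ 1) {u v : V} (w : G.Walk u v) :
    v = u ∨ G.Adj u v := by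
  induction w with
  | nil => exact Or.inl rfl
  | cons hadj w ih =>
    rcases ih with rfl | hadj'
    · exact Or.inr hadj
    · exact Or.inl ((Set.ncard_le_one (Set.toFinite _)).mp (hdeg _) _ hadj' _ hadj.symm)

lemma card_gballFinset_le_of_le_one {Δ : ℕ} (hdeg : ∀ v, (G.neighborSet v).ncard ≤ Δ)
    (hΔ : Δ ≤ 1) (i : V) (r : ℕ) : #(gballFinset G i r) ≤ Δ + 1 := by
  classical
  have hsub : gballFinset G i r ⊆ insert i (G.neighborFinset i) := fun v hv => by
    obtain ⟨w, -⟩ := mem_gballFinset.mp hv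
    rcases w.eq_or_adj_of_ncard_neighborSet_le_one (fun v => (hdeg v).trans hΔ) with rfl | hadj
    · exact mem_insert_self _ _
    · exact mem_insert_of_mem ((G.mem_neighborFinset _ _).mpr hadj)
  calc #(gballFinset G i r) ≤ #(G.neighborFinset i) + 1 :=
        (card_le_card hsub).trans (card_insert_le _ _)
    _ ≤ Δ + 1 := by gcongr; exact card_neighborFinset_le hdeg i

lemma card_gballFinset_le {Δ : ℕ} (hdeg : ∀ v, (G.neighborSet v).ncard ≤ Δ) (i : V)
    {r m : ℕ} (hrm : 2 * r ≤ m) : #(gballFinset G i r) ≤ Δ ^ m + 1 := by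
  rcases le_or_gt Δ 1 with hΔ | hΔ
  · refine (card_gballFinset_le_of_le_one hdeg hΔ i r).trans ?_
    interval_cases Δ <;> simp
  · calc #(gballFinset G i r) ≤ (Δ + 1) ^ r := card_gballFinset_le_pow hdeg i r
      _ ≤ (Δ ^ 2) ^ r := by gcongr; nlinarith
      _ ≤ Δ ^ m := by rw [← pow_mul]; exact Nat.pow_le_pow_right (by omega) (by omega)
      _ ≤ Δ ^ m + 1 := Nat.le_succ _

end Balls

theorem dicke_tower_equal_spacing_graph_general
    {V : Type*} [Fintype V] [DecidableEq V]
    (G : SimpleGraph V)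
    (Δ : ℕ) (hdeg : ∀ v : V, (G.neighborSet v).ncard ≤ Δ)
    (k R : ℕ) (hk : 0 < k)
    (hbig : 2 * k * (Δ ^ (4 * R) + 1) < Fintype.card V)
    (H : Module.End ℂ (QState V)) (hH : IsKLocalRangeHam G k R H)
    (E : ℕ → ℂ)
    (hE : ∀ p ≤ Fintype.card V, H (WState V p) = E p • WState V p) :
    ∃ Ω ω : ℂ, ∀ p ≤ Fintype.card V, E p = Ω + ω * p := by
  obtain ⟨h, hsupp, hloc, rfl⟩ := hH
  have hball (i : V) : #(gballFinset G i (R - 1 + (R - 1))) < #(univ : Finset V) :=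
    (card_gballFinset_le hdeg i (by omega)).trans_lt
      ((Nat.le_mul_of_pos_left _ (by omega)).trans_lt hbig)
  obtain ⟨j₁⟩ : Nonempty V := Fintype.card_pos_iff.mp (by omega)
  obtain ⟨j₂, -, hj₂⟩ := exists_mem_notMem_of_card_lt_card (hball j₁)
  have hstep (p : ℕ) (hp : p < Fintype.card V) : E (p + 1) - E p = E 1 - E 0 :=
    succ_sub_eq_one_sub_zero_of_local (B := fun i => gballFinset G i (R - 1))
      (fun i => mem_gballFinset_self i _)
      (fun _ _ _ hS hS' => eigenvalue_increment_eq_of_inter_eq hsupp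
        (fun S => hE _ (card_le_univ S)) (fun X hX hj => (hloc X hX).2.1.subset_gballFinset hj)
        hS hS')
      (disjoint_gballFinset (mt mem_gballFinset.mpr hj₂)) hp
  exact ⟨E 0, E 1 - E 0, fun p hp => by
    rw [eq_add_nsmul_of_forall_sub_eq hstep hp, nsmul_eq_mul, mul_comm]⟩

/-- Equal spacing of the Dicke tower on a connected bounded-degree graph for
k-local Hamiltonians of range R, when N > 2k(Δ^{4R}+1). -/
theorem dicke_tower_equal_spacing_graph
    {V : Type*} [Fintype V] [DecidableEq V]
    (G : SimpleGraph V) (hconn : G.Connected)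
    (Δ : ℕ) (hdeg : ∀ v : V, (G.neighborSet v).ncard ≤ Δ)
    (k R : ℕ) (hk : 0 < k) (hR : 0 < R)
    (hbig : 2 * k * (Δ ^ (4 * R) + 1) < Fintype.card V)
    (H : Module.End ℂ (QState V)) (hH : IsKLocalRangeHam G k R H)
    (E : ℕ → ℂ)
    (hE : ∀ p ≤ Fintype.card V, H (WState V p) = E p • WState V p) :
    ∃ Ω ω : ℂ, ∀ p ≤ Fintype.card V, E p = Ω + ω * p :=
  dicke_tower_equal_spacing_graph_general G Δ hdeg k R hk hbig H hH E hE
end
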